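/- Let f : {0,1} × R^{N×N}_sym → [0,∞) be continuous, symmetric quasiconvex in its second argument, and satisfy α|ξ| ≤ f(q,ξ) ≤ β(1+|ξ|) as well as the condition: there exist 0 < γ ≤ 1 and C > 0 with |f^∞(q,ξ) − f(q,ξ)| ≤ C(1 + |ξ|^{1−γ}). Then SQ(f^∞)(q,ξ) = (SQf)^∞(q,ξ) for every (q,ξ) ∈ {0,1} × R^{N×N}_sym, where SQ denotes the symmetric quasiconvex envelope in the second variable and ∞ the recession function. -/

import Mathlib

open MeasureTheory Filter Topology Metric
open scoped RealInnerProductSpace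

noncomputable section

/-- The space of `N × N` real matrices (as functions). -/
abbrev Mat (N : ℕ) := Fin N → Fin N → ℝ

/-- The (Frobenius) norm of a matrix. -/
def matNorm {N : ℕ} (ξ : Mat N) : ℝ := Real.sqrt (∑ i, ∑ j, (ξ i j) ^ 2)

/-- A matrix is symmetric. -/
def IsSymMat {N : ℕ} (ξ : Mat N) : Prop := ∀ i j, ξ i j = ξ j i

/-- The recession function in the second variable:
`f^∞(q,ξ) := limsup_{t → +∞} f(q, tξ)/t`. -/
def rec1 {N : ℕ} (g : Mat N → ℝ) (ξ : Mat N) : ℝ :=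
  Filter.limsup (fun t : ℝ => g (t • ξ) / t) Filter.atTop

/-- Euclidean space `ℝ^N`. -/
abbrev Vec (N : ℕ) := EuclideanSpace ℝ (Fin N)

/-- The symmetrised gradient `Eu(x) = (Du(x) + Du(x)ᵀ)/2` of a map `u : ℝ^N → ℝ^N`. -/
def symGrad {N : ℕ} (u : Vec N → Vec N) (x : Vec N) : Mat N :=
  fun i j => ((fderiv ℝ u x (EuclideanSpace.single j 1)) i
            + (fderiv ℝ u x (EuclideanSpace.single i 1)) j) / 2

/-- The open unit cube `Q = (-1/2, 1/2)^N`. -/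
def unitCube (N : ℕ) : Set (Vec N) := {x | ∀ i, |x i| < 1 / 2}

/-- `φ` is `Q`-periodic (period `1` in each coordinate direction). -/
def IsPeriodic {N : ℕ} (φ : Vec N → Vec N) : Prop :=
  ∀ x : Vec N, ∀ i : Fin N, φ (x + EuclideanSpace.single i 1) = φ x

/-- `f` is symmetric quasiconvex: `f(ξ) ≤ ∫_Q f(ξ + Eφ(x)) dx` for all smooth
`Q`-periodic `φ` and all symmetric `ξ`. -/
def SymQuasiconvex {N : ℕ} (f : Mat N → ℝ) : Prop :=
  ∀ ξ : Mat N, IsSymMat ξ → ∀ φ : Vec N → Vec N, ContDiff ℝ (⊤ : ℕ∞) φ → IsPeriodic φ →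
    f ξ ≤ ∫ x in unitCube N, f (ξ + symGrad φ x) ∂volume

/-- The values `∫_Q f(ξ + Eφ)` over smooth periodic test fields `φ`. -/
def SQSet {N : ℕ} (f : Mat N → ℝ) (ξ : Mat N) : Set ℝ :=
  {r | ∃ φ : Vec N → Vec N, ContDiff ℝ (⊤ : ℕ∞) φ ∧ IsPeriodic φ ∧
    r = ∫ x in unitCube N, f (ξ + symGrad φ x) ∂volume}

/-- The symmetric quasiconvex envelope `SQf`. -/
def SQ {N : ℕ} (f : Mat N → ℝ) (ξ : Mat N) : ℝ := sInf (SQSet f ξ)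

/-! ### Auxiliary lemmas -/

lemma matNorm_nonneg {N : ℕ} (ξ : Mat N) : 0 ≤ matNorm ξ := Real.sqrt_nonneg _

lemma matNorm_smul {N : ℕ} (c : ℝ) (hc : 0 ≤ c) (ξ : Mat N) :
    matNorm (c • ξ) = c * matNorm ξ := by
  unfold matNorm
  have h : ∀ i j : Fin N, ((c • ξ) i j) ^ 2 = c ^ 2 * (ξ i j) ^ 2 := by
    intro i j; simp [Pi.smul_apply, smul_eq_mul]; ring
  simp_rw [h, ← Finset.mul_sum]
  rw [Real.sqrt_mul (by positivity), Real.sqrt_sq hc]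

lemma isSymMat_smul {N : ℕ} {ξ : Mat N} (h : IsSymMat ξ) (c : ℝ) : IsSymMat (c • ξ) := by
  intro i j; simp [Pi.smul_apply, smul_eq_mul, h i j]

lemma isOpen_unitCube (N : ℕ) : IsOpen (unitCube N) := by
  have h : unitCube N = ⋂ i, (fun x : Vec N => x i) ⁻¹' {t | |t| < 1/2} := by
    ext x; simp [unitCube]
  rw [h]
  exact isOpen_iInter_of_finite fun i =>
    (isOpen_lt continuous_abs continuous_const).preimage (by fun_prop)

lemma measurableSet_unitCube (N : ℕ) : MeasurableSet (unitCube N) :=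
  (isOpen_unitCube N).measurableSet

lemma volume_unitCube (N : ℕ) : volume (unitCube N) = 1 := by
  have h : unitCube N = (MeasurableEquiv.toLp 2 (Fin N → ℝ)).symm ⁻¹'
      (Set.univ.pi fun _ : Fin N => Set.Ioo (-(1/2) : ℝ) (1/2)) := by
    ext x
    simp only [unitCube, Set.mem_setOf_eq, Set.mem_preimage, Set.mem_pi, Set.mem_univ,
      forall_true_left, Set.mem_Ioo]
    constructor
    · intro hx i; have := hx i; rw [abs_lt] at this; exact ⟨this.1, this.2⟩
    · intro hx i; rw [abs_lt]; exact ⟨(hx i).1, (hx i).2⟩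
  rw [h, (EuclideanSpace.volume_preserving_symm_measurableEquiv_toLp (Fin N)).measure_preimage
    (MeasurableSet.univ_pi fun _ => measurableSet_Ioo).nullMeasurableSet]
  rw [volume_pi_pi]
  simp [Real.volume_Ioo]
  norm_num

lemma setIntegral_const_unitCube {N : ℕ} (c : ℝ) : ∫ _ in unitCube N, c ∂volume = c := by
  rw [setIntegral_const, measureReal_def, volume_unitCube]; simp

lemma symGrad_zero {N : ℕ} (x : Vec N) : symGrad (fun _ => (0 : Vec N)) x = fun _ _ => (0:ℝ) := by
  funext i j
  simp [symGrad, fderiv_const]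

lemma self_mem_SQSet {N : ℕ} (f : Mat N → ℝ) (ξ : Mat N) : f ξ ∈ SQSet f ξ := by
  refine ⟨fun _ => 0, contDiff_const, fun x i => rfl, ?_⟩
  have h : ∀ x : Vec N, ξ + symGrad (fun _ => (0 : Vec N)) x = ξ := by
    intro x; rw [symGrad_zero]; funext i j; simp
  calc f ξ = ∫ _ in unitCube N, f ξ ∂volume := (setIntegral_const_unitCube _).symm
    _ = ∫ x in unitCube N, f (ξ + symGrad (fun _ => (0:Vec N)) x) ∂volume := by
        apply setIntegral_congr_fun (measurableSet_unitCube N)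
        intro x _; simp only []; rw [h]

lemma SQ_eq_self {N : ℕ} {f : Mat N → ℝ} (hqc : SymQuasiconvex f) {ξ : Mat N}
    (hξ : IsSymMat ξ) : SQ f ξ = f ξ := by
  have hlb : ∀ r ∈ SQSet f ξ, f ξ ≤ r := by
    rintro r ⟨φ, hφ1, hφ2, rfl⟩
    exact hqc ξ hξ φ hφ1 hφ2
  exact le_antisymm (csInf_le ⟨f ξ, fun r hr => hlb r hr⟩ (self_mem_SQSet f ξ))
    (le_csInf ⟨f ξ, self_mem_SQSet f ξ⟩ hlb)

/-! ### limsup manipulation -/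

lemma limsup_const_mul_atTop' {u : ℝ → ℝ} {B b : ℝ} (h : ∀ᶠ s in atTop, u s ∈ Set.Icc b B)
    {t : ℝ} (ht : 0 < t) :
    Filter.limsup (fun s => t * u s) Filter.atTop = t * Filter.limsup u Filter.atTop := by
  have hu_ub : Filter.IsBoundedUnder (· ≤ ·) Filter.atTop u :=
    Filter.isBoundedUnder_of_eventually_le (h.mono fun s hs => hs.2)
  have hu_lb : Filter.IsBoundedUnder (· ≥ ·) Filter.atTop u :=
    Filter.isBoundedUnder_of_eventually_ge (h.mono fun s hs => hs.1)
  have htu_ub : Filter.IsBoundedUnder (· ≤ ·) Filter.atTop (fun s => t * u s) :=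
    Filter.isBoundedUnder_of_eventually_le (f := Filter.atTop) (a := t * B)
      (h.mono fun s hs => mul_le_mul_of_nonneg_left hs.2 ht.le)
  have htu_lb : Filter.IsBoundedUnder (· ≥ ·) Filter.atTop (fun s => t * u s) :=
    Filter.isBoundedUnder_of_eventually_ge (f := Filter.atTop) (a := t * b)
      (h.mono fun s hs => mul_le_mul_of_nonneg_left hs.1 ht.le)
  have := (OrderIso.mulLeft₀ t ht).limsup_apply (u := u) (f := Filter.atTop)
    hu_ub hu_lb.isCoboundedUnder_le htu_ub htu_lb.isCoboundedUnder_le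
  simpa using this.symm

lemma limsup_comp_mulRight {u : ℝ → ℝ} {t : ℝ} (ht : 0 < t) :
    Filter.limsup (fun s => u (s * t)) Filter.atTop = Filter.limsup u Filter.atTop := by
  have h1 : (fun s => u (s * t)) = u ∘ (fun s => s * t) := rfl
  rw [h1, Filter.limsup_comp]
  congr 1
  have h2 : (fun s : ℝ => s * t) = ⇑(OrderIso.mulRight₀ t ht) := by
    funext s; rfl
  rw [h2, OrderIso.map_atTop]

/-! ### Properties of the recession function -/

section rec

variable {N : ℕ} {g : Mat N → ℝ} {β : ℝ}

lemma rec1_ev (h0 : ∀ ζ, 0 ≤ g ζ) (hub : ∀ ζ, IsSymMat ζ → g ζ ≤ β * (1 + matNorm ζ))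
    (hβ : 0 ≤ β) {ξ : Mat N} (hξ : IsSymMat ξ) :
    ∀ᶠ s in atTop, g (s • ξ) / s ∈ Set.Icc 0 (β * (1 + matNorm ξ)) := by
  filter_upwards [eventually_ge_atTop (1:ℝ)] with s hs
  have hs0 : (0:ℝ) < s := lt_of_lt_of_le one_pos hs
  constructor
  · exact div_nonneg (h0 _) hs0.le
  · rw [div_le_iff₀ hs0]
    have h1 : g (s • ξ) ≤ β * (1 + matNorm (s • ξ)) := hub _ (isSymMat_smul hξ s)
    rw [matNorm_smul s hs0.le] at h1
    have h2 : 1 + s * matNorm ξ ≤ s * (1 + matNorm ξ) := by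
      have := matNorm_nonneg ξ; nlinarith
    calc g (s • ξ) ≤ β * (1 + s * matNorm ξ) := h1
      _ ≤ β * (s * (1 + matNorm ξ)) := by apply mul_le_mul_of_nonneg_left h2 hβ
      _ = β * (1 + matNorm ξ) * s := by ring

lemma rec1_homog (h0 : ∀ ζ, 0 ≤ g ζ) (hub : ∀ ζ, IsSymMat ζ → g ζ ≤ β * (1 + matNorm ζ))
    (hβ : 0 ≤ β) {ξ : Mat N} (hξ : IsSymMat ξ) {t : ℝ} (ht : 0 < t) :
    rec1 g (t • ξ) = t * rec1 g ξ := by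
  unfold rec1
  have e1 : (fun s : ℝ => g (s • t • ξ) / s) =ᶠ[atTop]
      (fun s => t * (g ((s * t) • ξ) / (s * t))) := by
    filter_upwards [eventually_gt_atTop (0:ℝ)] with s hs
    rw [smul_smul]
    field_simp
  rw [Filter.limsup_congr e1]
  have e2 : Filter.limsup (fun s => t * (g ((s * t) • ξ) / (s * t))) Filter.atTop
      = Filter.limsup (fun s => t * (g (s • ξ) / s)) Filter.atTop :=
    limsup_comp_mulRight (u := fun s => t * (g (s • ξ) / s)) ht
  rw [e2, limsup_const_mul_atTop' (rec1_ev h0 hub hβ hξ) ht]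

lemma rec1_tendsto {C γ : ℝ} (h0 : ∀ ζ, 0 ≤ g ζ)
    (hub : ∀ ζ, IsSymMat ζ → g ζ ≤ β * (1 + matNorm ζ)) (hβ : 0 ≤ β)
    (hγ : 0 < γ)
    (hco : ∀ ζ, IsSymMat ζ → |rec1 g ζ - g ζ| ≤ C * (1 + matNorm ζ ^ (1 - γ)))
    {ξ : Mat N} (hξ : IsSymMat ξ) :
    Filter.Tendsto (fun t => g (t • ξ) / t) Filter.atTop (𝓝 (rec1 g ξ)) := by
  rw [← tendsto_sub_nhds_zero_iff]
  apply squeeze_zero_norm' (a := fun t => C / t + C * t ^ (-γ) * matNorm ξ ^ ((1:ℝ) - γ))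
  · filter_upwards [eventually_ge_atTop (1:ℝ)] with t htt
    have ht0 : (0:ℝ) < t := lt_of_lt_of_le one_pos htt
    have hhom := rec1_homog h0 hub hβ hξ ht0
    have hb := hco (t • ξ) (isSymMat_smul hξ t)
    rw [matNorm_smul t ht0.le] at hb
    have hmul : (t * matNorm ξ) ^ ((1:ℝ) - γ) = t ^ ((1:ℝ)-γ) * matNorm ξ ^ ((1:ℝ)-γ) :=
      Real.mul_rpow ht0.le (matNorm_nonneg ξ)
    rw [hmul] at hb
    have key : g (t • ξ) / t - rec1 g ξ = (g (t • ξ) - rec1 g (t • ξ)) / t := by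
      rw [hhom]; field_simp
    rw [Real.norm_eq_abs, key, abs_div, abs_of_pos ht0, abs_sub_comm]
    rw [div_le_iff₀ ht0]
    have expand : (C / t + C * t ^ (-γ) * matNorm ξ ^ ((1:ℝ) - γ)) * t
        = C + C * (t ^ (-γ) * t) * matNorm ξ ^ ((1:ℝ) - γ) := by
      field_simp
    have tpow : t ^ (-γ) * t = t ^ ((1:ℝ) - γ) := by
      nth_rewrite 2 [← Real.rpow_one t]
      rw [← Real.rpow_add ht0]
      ring_nf
    rw [expand, tpow]
    linarith [hb]
  · have h1 : Filter.Tendsto (fun t : ℝ => C / t) Filter.atTop (𝓝 0) :=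
      tendsto_const_nhds.div_atTop tendsto_id
    have h2 : Filter.Tendsto (fun t : ℝ => t ^ (-γ)) Filter.atTop (𝓝 (0:ℝ)) :=
      tendsto_rpow_neg_atTop hγ
    have h3 := (h1.add (((h2.const_mul C).mul_const (matNorm ξ ^ ((1:ℝ) - γ)))))
    simpa using h3

end rec

/-! ### Integrability infrastructure -/

lemma unitCube_subset_ball (N : ℕ) : unitCube N ⊆ closedBall (0 : Vec N) (N + 1) := by
  intro x hx
  rw [mem_closedBall, dist_zero_right, EuclideanSpace.norm_eq]
  have h1 : (∑ i, ‖x i‖ ^ 2) ≤ ∑ _i : Fin N, (1:ℝ) :=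
    Finset.sum_le_sum fun i _ => by
      have := (hx i).le
      rw [Real.norm_eq_abs]
      nlinarith [abs_nonneg (x i)]
  simp only [Finset.sum_const, Finset.card_univ, Fintype.card_fin, nsmul_eq_mul, mul_one] at h1
  calc Real.sqrt (∑ i, ‖x i‖ ^ 2) ≤ Real.sqrt ((N:ℝ)) := Real.sqrt_le_sqrt h1
    _ ≤ (N:ℝ) + 1 := by
        rw [show ((N:ℝ)+1) = Real.sqrt (((N:ℝ)+1)^2) by
          rw [Real.sqrt_sq (by positivity)]]
        apply Real.sqrt_le_sqrt; nlinarith [Nat.cast_nonneg (α := ℝ) N]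

lemma integrableOn_unitCube {N : ℕ} {u : Vec N → ℝ} (h : Continuous u) :
    IntegrableOn u (unitCube N) volume :=
  ((h.locallyIntegrable (μ := volume)).integrableOn_isCompact
    (isCompact_closedBall (0 : Vec N) (N + 1))).mono_set (unitCube_subset_ball N)

lemma continuous_symGrad {N : ℕ} {φ : Vec N → Vec N} (hφ : ContDiff ℝ (⊤ : ℕ∞) φ) :
    Continuous fun x => symGrad φ x := by
  have hfd : Continuous fun x => fderiv ℝ φ x := (hφ.continuous_fderiv (by simp))
  apply continuous_pi; intro i; apply continuous_pi; intro j
  apply Continuous.div_const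
  apply Continuous.add
  · exact (continuous_apply i).comp ((PiLp.continuous_ofLp 2 _).comp (hfd.clm_apply continuous_const))
  · exact (continuous_apply j).comp ((PiLp.continuous_ofLp 2 _).comp (hfd.clm_apply continuous_const))

lemma continuous_matNorm {N : ℕ} : Continuous (matNorm (N := N)) := by
  apply Real.continuous_sqrt.comp
  apply continuous_finset_sum; intro i _
  apply continuous_finset_sum; intro j _
  exact ((continuous_apply j).comp (continuous_apply i)).pow 2

lemma rpow_le_one_add {a p : ℝ} (ha : 0 ≤ a) (hp0 : 0 ≤ p) (hp1 : p ≤ 1) :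
    a ^ p ≤ 1 + a := by
  rcases le_total a 1 with h | h
  · have := Real.rpow_le_one ha h hp0
    linarith
  · calc a ^ p ≤ a ^ (1:ℝ) := Real.rpow_le_rpow_of_exponent_le h hp1
      _ = a := Real.rpow_one a
      _ ≤ 1 + a := by linarith

lemma symGrad_const_smul {N : ℕ} {φ : Vec N → Vec N} (hφ : ContDiff ℝ (⊤ : ℕ∞) φ) (t : ℝ)
    (x : Vec N) : symGrad (fun y => t • φ y) x = fun i j => t * symGrad φ x i j := by
  funext i j
  have hd : DifferentiableAt ℝ φ x := (hφ.differentiable (by simp)) x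
  have h1 : fderiv ℝ (fun y => t • φ y) x = t • fderiv ℝ φ x := fderiv_fun_const_smul hd t
  simp only [symGrad, h1, ContinuousLinearMap.smul_apply, PiLp.smul_apply, smul_eq_mul]
  ring

/-- commutation of envelope and recession: `SQ(f^∞)(q,·) = (SQf)^∞(q,·)`
for `q ∈ {0,1}`, for a continuous `f`, symmetric quasiconvex in its second argument,
with linear growth and satisfying `|f^∞(q,ξ) - f(q,ξ)| ≤ C(1 + |ξ|^{1-γ})`. -/
theorem statement7 {N : ℕ} (hN : 0 < N) (f : ℝ → Mat N → ℝ)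
    (hcont : ∀ q ∈ ({0, 1} : Set ℝ), Continuous (f q))
    (hf0 : ∀ q ξ, 0 ≤ f q ξ)
    (hqc : ∀ q ∈ ({0, 1} : Set ℝ), SymQuasiconvex (f q))
    (α β : ℝ) (hα : 0 < α) (hαβ : α ≤ β)
    (hgrowth : ∀ q ∈ ({0, 1} : Set ℝ), ∀ ξ : Mat N, IsSymMat ξ →
      α * matNorm ξ ≤ f q ξ ∧ f q ξ ≤ β * (1 + matNorm ξ))
    (γ C : ℝ) (hγ : 0 < γ) (hγ1 : γ ≤ 1) (hC : 0 < C)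
    (hcoinc : ∀ q ∈ ({0, 1} : Set ℝ), ∀ ξ : Mat N, IsSymMat ξ →
      |rec1 (f q) ξ - f q ξ| ≤ C * (1 + matNorm ξ ^ (1 - γ))) :
    ∀ q ∈ ({0, 1} : Set ℝ), ∀ ξ : Mat N, IsSymMat ξ →
      SQ (fun η => rec1 (f q) η) ξ = rec1 (fun η => SQ (f q) η) ξ := by
  intro q hq ξ hξ
  set g := f q with hg
  have hgc : Continuous g := hcont q hq
  have hgqc : SymQuasiconvex g := hqc q hq
  have h0 : ∀ ζ, 0 ≤ g ζ := fun ζ => hf0 q ζ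
  have hub : ∀ ζ, IsSymMat ζ → g ζ ≤ β * (1 + matNorm ζ) := fun ζ h => (hgrowth q hq ζ h).2
  have hβ : 0 ≤ β := le_trans hα.le hαβ
  have hco : ∀ ζ, IsSymMat ζ → |rec1 g ζ - g ζ| ≤ C * (1 + matNorm ζ ^ (1-γ)) :=
    fun ζ h => hcoinc q hq ζ h
  -- RHS equals `rec1 g ξ`
  have hRHS : rec1 (fun η => SQ g η) ξ = rec1 g ξ := by
    unfold rec1
    congr 1
    funext t
    show SQ g (t • ξ) / t = g (t • ξ) / t
    rw [SQ_eq_self hgqc (isSymMat_smul hξ t)]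
  -- the hard inequality
  have hard : ∀ r ∈ SQSet (fun η => rec1 g η) ξ, rec1 g ξ ≤ r := by
    rintro r ⟨φ, hφ, hper, rfl⟩
    set η : Vec N → Mat N := fun x => ξ + symGrad φ x with hη
    have hηsym : ∀ x, IsSymMat (η x) := by
      intro x i j
      simp only [hη, Pi.add_apply, symGrad]
      rw [hξ i j]
      ring
    have hηcont : Continuous η := continuous_const.add (continuous_symGrad hφ)
    have hmcont : Continuous fun x => matNorm (η x) := continuous_matNorm.comp hηcont
    set I := ∫ x in unitCube N, rec1 g (η x) ∂volume with hI
    set K := ∫ x in unitCube N, matNorm (η x) ∂volume with hK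
    -- measurability of `rec1 g ∘ η`
    have hmeas : AEStronglyMeasurable (fun x => rec1 g (η x))
        (volume.restrict (unitCube N)) := by
      apply aestronglyMeasurable_of_tendsto_ae (u := atTop)
        (f := fun (n : ℕ) x => g ((n : ℝ) • η x) / (n : ℝ))
      · intro n
        exact ((hgc.comp (hηcont.const_smul (n : ℝ))).div_const _).aestronglyMeasurable
      · apply Eventually.of_forall
        intro x
        exact (rec1_tendsto h0 hub hβ hγ hco (hηsym x)).comp tendsto_natCast_atTop_atTop
    have hbound : ∀ x, |rec1 g (η x)| ≤ g (η x) + C * (2 + matNorm (η x)) := by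
      intro x
      have h1 := hco (η x) (hηsym x)
      have h2 : matNorm (η x) ^ ((1:ℝ) - γ) ≤ 1 + matNorm (η x) :=
        rpow_le_one_add (matNorm_nonneg _) (by linarith) (by linarith)
      have h3 : |rec1 g (η x)| ≤ |rec1 g (η x) - g (η x)| + |g (η x)| := by
        have := abs_add_le (rec1 g (η x) - g (η x)) (g (η x))
        simpa using this
      have h4 : |g (η x)| = g (η x) := abs_of_nonneg (h0 _)
      have h5 : C * (1 + matNorm (η x) ^ (1 - γ)) ≤ C * (2 + matNorm (η x)) := by
        apply mul_le_mul_of_nonneg_left _ hC.le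
        linarith
      calc |rec1 g (η x)| ≤ |rec1 g (η x) - g (η x)| + g (η x) := by rw [h4] at h3; exact h3
        _ ≤ C * (1 + matNorm (η x) ^ (1 - γ)) + g (η x) := by linarith
        _ ≤ g (η x) + C * (2 + matNorm (η x)) := by linarith
    have hGcont : Continuous fun x => g (η x) + C * (2 + matNorm (η x)) :=
      (hgc.comp hηcont).add (continuous_const.mul (continuous_const.add hmcont))
    have hInt : IntegrableOn (fun x => rec1 g (η x)) (unitCube N) volume := by
      apply Integrable.mono' (integrableOn_unitCube hGcont) hmeas
      exact Eventually.of_forall fun x => by rw [Real.norm_eq_abs]; exact hbound x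
    have hIntm : IntegrableOn (fun x => matNorm (η x)) (unitCube N) volume :=
      integrableOn_unitCube hmcont
    -- eventual bound
    have hev : ∀ᶠ t in atTop, g (t • ξ) / t ≤ I + (C / t + C * t ^ (-γ) * (1 + K)) := by
      filter_upwards [eventually_ge_atTop (1:ℝ)] with t htt
      have ht0 : (0:ℝ) < t := lt_of_lt_of_le one_pos htt
      -- quasiconvexity with the rescaled test field
      have hφt : ContDiff ℝ (⊤ : ℕ∞) (fun y => t • φ y) := hφ.const_smul t
      have hpert : IsPeriodic (fun y => t • φ y) := fun x i => by simp [hper x i]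
      have hq1 : g (t • ξ) ≤ ∫ x in unitCube N,
          g (t • ξ + symGrad (fun y => t • φ y) x) ∂volume :=
        hgqc (t • ξ) (isSymMat_smul hξ t) _ hφt hpert
      have hrew : ∀ x : Vec N, t • ξ + symGrad (fun y => t • φ y) x = t • η x := by
        intro x
        rw [symGrad_const_smul hφ t x]
        funext i j
        simp only [hη, Pi.add_apply, Pi.smul_apply, smul_eq_mul]
        ring
      have hq2 : g (t • ξ) ≤ ∫ x in unitCube N, g (t • η x) ∂volume := by
        refine hq1.trans_eq ?_
        apply setIntegral_congr_fun (measurableSet_unitCube N)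
        intro x _
        simp only []
        rw [hrew x]
      -- pointwise bound on the integrand
      have hpt : ∀ x, g (t • η x) ≤ t * rec1 g (η x)
          + (C + C * t ^ ((1:ℝ)-γ) + C * t ^ ((1:ℝ)-γ) * matNorm (η x)) := by
        intro x
        have h1 := hco (t • η x) (isSymMat_smul (hηsym x) t)
        rw [matNorm_smul t ht0.le] at h1
        have h2 : (t * matNorm (η x)) ^ ((1:ℝ) - γ)
            = t ^ ((1:ℝ)-γ) * matNorm (η x) ^ ((1:ℝ)-γ) :=
          Real.mul_rpow ht0.le (matNorm_nonneg _)
        rw [h2] at h1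
        have h3 : rec1 g (t • η x) = t * rec1 g (η x) :=
          rec1_homog h0 hub hβ (hηsym x) ht0
        have h4 : matNorm (η x) ^ ((1:ℝ) - γ) ≤ 1 + matNorm (η x) :=
          rpow_le_one_add (matNorm_nonneg _) (by linarith) (by linarith)
        have h5 : (0:ℝ) ≤ t ^ ((1:ℝ)-γ) := Real.rpow_nonneg ht0.le _
        have h6 : t ^ ((1:ℝ)-γ) * matNorm (η x) ^ ((1:ℝ)-γ)
            ≤ t ^ ((1:ℝ)-γ) * (1 + matNorm (η x)) := mul_le_mul_of_nonneg_left h4 h5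
        have habs := (abs_le.1 h1).1
        rw [h3] at habs
        nlinarith [hC.le]
      -- integrate the pointwise bound
      have hIntL : IntegrableOn (fun x => g (t • η x)) (unitCube N) volume :=
        integrableOn_unitCube (hgc.comp (hηcont.const_smul t))
      have hIntR : IntegrableOn (fun x => t * rec1 g (η x)
          + (C + C * t ^ ((1:ℝ)-γ) + C * t ^ ((1:ℝ)-γ) * matNorm (η x)))
          (unitCube N) volume := by
        apply Integrable.add (hInt.const_mul t)
        apply Integrable.add
        · exact Integrable.add
            (integrableOn_const (by rw [volume_unitCube]; exact ENNReal.one_ne_top))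
            (integrableOn_const (by rw [volume_unitCube]; exact ENNReal.one_ne_top))
        · exact hIntm.const_mul _
      have hq3 : (∫ x in unitCube N, g (t • η x) ∂volume)
          ≤ t * I + (C + C * t ^ ((1:ℝ)-γ) + C * t ^ ((1:ℝ)-γ) * K) := by
        have := setIntegral_mono_on hIntL hIntR (measurableSet_unitCube N)
          (fun x _ => hpt x)
        refine this.trans_eq ?_
        rw [integral_add (hInt.const_mul t)]
        · rw [integral_const_mul, integral_add]
          · rw [integral_add]
            · rw [setIntegral_const_unitCube, setIntegral_const_unitCube,
                integral_const_mul, hI, hK]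
            · exact integrableOn_const (by rw [volume_unitCube]; exact ENNReal.one_ne_top)
            · exact integrableOn_const (by rw [volume_unitCube]; exact ENNReal.one_ne_top)
          · exact Integrable.add
              (integrableOn_const (by rw [volume_unitCube]; exact ENNReal.one_ne_top))
              (integrableOn_const (by rw [volume_unitCube]; exact ENNReal.one_ne_top))
          · exact hIntm.const_mul _
        · apply Integrable.add
          · exact Integrable.add
              (integrableOn_const (by rw [volume_unitCube]; exact ENNReal.one_ne_top))
              (integrableOn_const (by rw [volume_unitCube]; exact ENNReal.one_ne_top))
          · exact hIntm.const_mul _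
      have hq4 : g (t • ξ) ≤ t * I + (C + C * t ^ ((1:ℝ)-γ) + C * t ^ ((1:ℝ)-γ) * K) :=
        hq2.trans hq3
      rw [div_le_iff₀ ht0]
      have tpow : t ^ (-γ) * t = t ^ ((1:ℝ) - γ) := by
        nth_rewrite 2 [← Real.rpow_one t]
        rw [← Real.rpow_add ht0]
        ring_nf
      have expand : (I + (C / t + C * t ^ (-γ) * (1 + K))) * t
          = t * I + (C + C * (t ^ (-γ) * t) + C * (t ^ (-γ) * t) * K) := by
        field_simp
        ring
      rw [expand, tpow]
      exact hq4
    -- take limits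
    have hlim2 : Filter.Tendsto (fun t : ℝ => I + (C / t + C * t ^ (-γ) * (1 + K)))
        Filter.atTop (𝓝 I) := by
      have h1 : Filter.Tendsto (fun t : ℝ => C / t) Filter.atTop (𝓝 0) :=
        tendsto_const_nhds.div_atTop tendsto_id
      have h2 : Filter.Tendsto (fun t : ℝ => t ^ (-γ)) Filter.atTop (𝓝 (0:ℝ)) :=
        tendsto_rpow_neg_atTop hγ
      have h3 := tendsto_const_nhds (x := I) (f := Filter.atTop (α := ℝ)) |>.add
        (h1.add ((h2.const_mul C).mul_const (1 + K)))
      simpa using h3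
    exact le_of_tendsto_of_tendsto (rec1_tendsto h0 hub hβ hγ hco hξ) hlim2 hev
  -- conclude
  have hmem : rec1 g ξ ∈ SQSet (fun η => rec1 g η) ξ := self_mem_SQSet (fun η => rec1 g η) ξ
  have hLHS : SQ (fun η => rec1 g η) ξ = rec1 g ξ :=
    le_antisymm (csInf_le ⟨rec1 g ξ, fun r hr => hard r hr⟩ hmem)
      (le_csInf ⟨rec1 g ξ, hmem⟩ hard)
  rw [hLHS, hRHS]
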